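/- (Theorem 1) Let Γ₁ ⊆ Γ₂ ⊆ ⋯ be an increasing chain of finite convex subsets of ℤ² with ∪_{n=1}^∞ Γₙ = ℤ². Then the natural homomorphism from H_ℝ(ℤ²)/H_ℤ(ℤ²) to the inverse limit lim← H_{ℝ/ℤ}(Γₙ) = {(ψₙ) ∈ Π_n H_{ℝ/ℤ}(Γₙ) : ψ_{n+1}|_{Γₙ} = ψₙ} — the map sending the class of a real-valued harmonic function f on ℤ² to the sequence of restrictions to Γₙ of its pointwise reduction modulo ℤ — is a group isomorphism. (Equivalently, by the identification of the extended sandpile group G̃(Γ) with H_{ℝ/ℤ}(Γ), the inclusion of H_ℝ(ℤ²)/H_ℤ(ℤ²) into lim_{ℤ²←Γ} G̃(Γ) is an isomorphism.) -/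
import Mathlib


/-- The interior of `Γ ⊆ ℤ²`: points of `Γ` all four of whose lattice neighbors
also lie in `Γ`. -/
def latInterior (Γ : Set (ℤ × ℤ)) : Set (ℤ × ℤ) :=
  {v | v ∈ Γ ∧ (v.1 + 1, v.2) ∈ Γ ∧ (v.1 - 1, v.2) ∈ Γ ∧
       (v.1, v.2 + 1) ∈ Γ ∧ (v.1, v.2 - 1) ∈ Γ}

/-- An `A`-valued function on `Γ ⊆ ℤ²` is harmonic if the discrete Laplace
equation holds at every interior point of `Γ`. -/
def IsHarmonicOn {A : Type} [AddCommGroup A] (Γ : Set (ℤ × ℤ)) (f : Γ → A) : Prop :=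
  ∀ v, ∀ h : v ∈ latInterior Γ,
    (4 : ℤ) • f ⟨v, h.1⟩ =
      f ⟨(v.1 + 1, v.2), h.2.1⟩ + f ⟨(v.1 - 1, v.2), h.2.2.1⟩ +
      f ⟨(v.1, v.2 + 1), h.2.2.2.1⟩ + f ⟨(v.1, v.2 - 1), h.2.2.2.2⟩

/-- An `A`-valued function on all of `ℤ²` is harmonic if the discrete Laplace
equation holds at every point. -/
def IsHarmonicAll {A : Type} [AddCommGroup A] (f : ℤ × ℤ → A) : Prop :=
  ∀ v : ℤ × ℤ, (4 : ℤ) • f v =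
    f (v.1 + 1, v.2) + f (v.1 - 1, v.2) + f (v.1, v.2 + 1) + f (v.1, v.2 - 1)

/-- `Γ ⊆ ℤ²` is convex if it is the set of lattice points of a convex subset of `ℝ²`. -/
def LatticeConvex (Γ : Set (ℤ × ℤ)) : Prop :=
  ∃ C : Set (ℝ × ℝ), Convex ℝ C ∧ Γ = {v : ℤ × ℤ | ((v.1 : ℝ), (v.2 : ℝ)) ∈ C}



noncomputable def sandPhi : ℝ →+ AddCircle (1:ℝ) := QuotientAddGroup.mk' _

lemma sandPhi_eq (a : ℝ) : (a : AddCircle (1:ℝ)) = sandPhi a := rfl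

lemma sandPhi_out (q : AddCircle (1:ℝ)) : sandPhi q.out = q := Quotient.out_eq q

lemma sandPhi_four (a : ℝ) : sandPhi (4 * a) = (4:ℤ) • sandPhi a := by
  rw [show (4:ℝ) * a = (4:ℤ) • a by rw [zsmul_eq_mul]; norm_num, map_zsmul]

lemma sand_coe_eq_iff (a b : ℝ) :
    (a : AddCircle (1:ℝ)) = b ↔ ∃ k : ℤ, a = b + k := by
  constructor
  · intro h
    have h2 : ((a - b : ℝ) : AddCircle (1:ℝ)) = 0 := by
      rw [AddCircle.coe_sub, sub_eq_zero]; exact h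
    rw [AddCircle.coe_eq_zero_iff] at h2
    obtain ⟨n, hn⟩ := h2
    refine ⟨n, ?_⟩
    have : (n : ℝ) = a - b := by simpa using hn
    linarith
  · rintro ⟨k, rfl⟩
    rw [AddCircle.coe_add, show (((k:ℝ)) : AddCircle (1:ℝ)) = 0 by
      rw [AddCircle.coe_eq_zero_iff]; exact ⟨k, by simp⟩, add_zero]

/-- Rows of the harmonic lift, built by the two-step Laplace recursion. -/
def sandRow (r0 r1 : ℤ → ℝ) : ℕ → ℤ → ℝ
  | 0 => r0
  | 1 => r1
  | (n+2) => fun x => 4 * sandRow r0 r1 (n+1) x - sandRow r0 r1 (n+1) (x+1)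
      - sandRow r0 r1 (n+1) (x-1) - sandRow r0 r1 n x

lemma sandRow_mod (τ : ℕ → ℤ → AddCircle (1:ℝ))
    (hτ : ∀ n x, (4:ℤ) • τ (n+1) x =
      τ (n+1) (x+1) + τ (n+1) (x-1) + τ (n+2) x + τ n x)
    (r0 r1 : ℤ → ℝ) (h0 : ∀ x, sandPhi (r0 x) = τ 0 x)
    (h1 : ∀ x, sandPhi (r1 x) = τ 1 x) :
    ∀ n x, sandPhi (sandRow r0 r1 n x) = τ n x := by
  intro n
  induction n using Nat.twoStepInduction with
  | zero => exact h0
  | one => exact h1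
  | more n ih ih' =>
    intro x
    simp only [sandRow]
    rw [map_sub, map_sub, map_sub, sandPhi_four, ih' x, ih' (x+1), ih' (x-1), ih x,
      hτ n x]
    abel

/-- The harmonic lift itself. -/
noncomputable def sandLift (r0 r1 : ℤ → ℝ) : ℤ × ℤ → ℝ := fun v =>
  if 0 ≤ v.2 then sandRow r0 r1 v.2.toNat v.1
  else sandRow r1 r0 (1 - v.2).toNat v.1

lemma sandLift_U (r0 r1 : ℤ → ℝ) (x y : ℤ) (h : 0 ≤ y) :
    sandLift r0 r1 (x, y) = sandRow r0 r1 y.toNat x := by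
  simp [sandLift, h]

lemma sandLift_D (r0 r1 : ℤ → ℝ) (x y : ℤ) (h : y ≤ 1) :
    sandLift r0 r1 (x, y) = sandRow r1 r0 (1 - y).toNat x := by
  by_cases h0 : 0 ≤ y
  · have : y = 0 ∨ y = 1 := by omega
    rcases this with rfl | rfl
    · norm_num [sandLift, sandRow]
    · norm_num [sandLift, sandRow]
  · simp [sandLift, h0]

lemma sandLift_harmonic (r0 r1 : ℤ → ℝ) : IsHarmonicAll (sandLift r0 r1) := by
  rintro ⟨x, y⟩
  show (4:ℤ) • sandLift r0 r1 (x, y) = sandLift r0 r1 (x+1, y) + sandLift r0 r1 (x-1, y)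
      + sandLift r0 r1 (x, y+1) + sandLift r0 r1 (x, y-1)
  by_cases hy : 1 ≤ y
  · obtain ⟨n, rfl⟩ : ∃ n : ℕ, y = (n:ℤ) + 1 := ⟨(y-1).toNat, by omega⟩
    rw [sandLift_U _ _ _ _ (by omega), sandLift_U _ _ _ _ (by omega),
      sandLift_U _ _ _ _ (by omega), sandLift_U _ _ _ _ (by omega),
      sandLift_U _ _ _ _ (by omega),
      show ((n:ℤ)+1).toNat = n+1 by omega, show ((n:ℤ)+1+1).toNat = n+2 by omega,
      show ((n:ℤ)+1-1).toNat = n by omega]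
    simp only [sandRow]
    rw [zsmul_eq_mul]
    push_cast
    ring
  · obtain ⟨n, rfl⟩ : ∃ n : ℕ, y = -(n:ℤ) := ⟨(-y).toNat, by omega⟩
    rw [sandLift_D _ _ _ _ (by omega), sandLift_D _ _ _ _ (by omega),
      sandLift_D _ _ _ _ (by omega), sandLift_D _ _ _ _ (by omega),
      sandLift_D _ _ _ _ (by omega),
      show ((1:ℤ) - -(n:ℤ)).toNat = n+1 by omega,
      show ((1:ℤ) - (-(n:ℤ)+1)).toNat = n by omega,
      show ((1:ℤ) - (-(n:ℤ)-1)).toNat = n+2 by omega]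
    simp only [sandRow]
    rw [zsmul_eq_mul]
    push_cast
    ring

lemma sand_lift_exists (ψ : ℤ × ℤ → AddCircle (1:ℝ)) (hψ : IsHarmonicAll ψ) :
    ∃ f : ℤ × ℤ → ℝ, IsHarmonicAll f ∧ ∀ v, (f v : AddCircle (1:ℝ)) = ψ v := by
  set r0 : ℤ → ℝ := fun x => (ψ (x, 0)).out with hr0
  set r1 : ℤ → ℝ := fun x => (ψ (x, 1)).out with hr1
  have claimU : ∀ n x, sandPhi (sandRow r0 r1 n x) = ψ (x, (n:ℤ)) := by
    refine sandRow_mod (fun n x => ψ (x, (n:ℤ))) ?_ r0 r1 ?_ ?_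
    · intro n x
      show (4:ℤ) • ψ (x, ((n+1:ℕ):ℤ)) = ψ (x+1, ((n+1:ℕ):ℤ)) + ψ (x-1, ((n+1:ℕ):ℤ))
        + ψ (x, ((n+2:ℕ):ℤ)) + ψ (x, (n:ℤ))
      push_cast
      have hc : (4:ℤ) • ψ (x, (n:ℤ)+1) = ψ (x+1, (n:ℤ)+1) + ψ (x-1, (n:ℤ)+1)
          + ψ (x, (n:ℤ)+1+1) + ψ (x, (n:ℤ)+1-1) := hψ (x, (n:ℤ)+1)
      rw [show (n:ℤ)+1+1 = (n:ℤ)+2 by ring, show (n:ℤ)+1-1 = (n:ℤ) by ring] at hc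
      exact hc
    · intro x; exact sandPhi_out _
    · intro x; exact sandPhi_out _
  have claimD : ∀ n x, sandPhi (sandRow r1 r0 n x) = ψ (x, 1 - (n:ℤ)) := by
    refine sandRow_mod (fun n x => ψ (x, 1 - (n:ℤ))) ?_ r1 r0 ?_ ?_
    · intro n x
      show (4:ℤ) • ψ (x, 1 - ((n+1:ℕ):ℤ)) = ψ (x+1, 1 - ((n+1:ℕ):ℤ))
        + ψ (x-1, 1 - ((n+1:ℕ):ℤ)) + ψ (x, 1 - ((n+2:ℕ):ℤ)) + ψ (x, 1 - (n:ℤ))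
      push_cast
      have hc : (4:ℤ) • ψ (x, 1-((n:ℤ)+1)) = ψ (x+1, 1-((n:ℤ)+1)) + ψ (x-1, 1-((n:ℤ)+1))
          + ψ (x, 1-((n:ℤ)+1)+1) + ψ (x, 1-((n:ℤ)+1)-1) := hψ (x, 1-((n:ℤ)+1))
      rw [show (1:ℤ)-((n:ℤ)+1)+1 = 1-(n:ℤ) by ring,
        show (1:ℤ)-((n:ℤ)+1)-1 = 1-((n:ℤ)+2) by ring] at hc
      rw [hc]; abel
    · intro x; exact sandPhi_out _
    · intro x; exact sandPhi_out _
  refine ⟨sandLift r0 r1, sandLift_harmonic r0 r1, ?_⟩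
  rintro ⟨x, y⟩
  rw [sandPhi_eq]
  by_cases h : 0 ≤ y
  · rw [sandLift_U _ _ _ _ h]
    have := claimU y.toNat x
    rwa [show ((y.toNat:ℕ):ℤ) = y by omega] at this
  · rw [sandLift_D _ _ _ _ (by omega)]
    have := claimD (1-y).toNat x
    rwa [show (1:ℤ) - (((1-y).toNat:ℕ):ℤ) = y by omega] at this

/-- Theorem 1: for an increasing chain `Γ₁ ⊆ Γ₂ ⊆ ⋯` of finite convex subsets of
`ℤ²` whose union is `ℤ²`, the natural homomorphism from `H_ℝ(ℤ²)/H_ℤ(ℤ²)` to the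
inverse limit `lim← H_{ℝ/ℤ}(Γₙ)` — sending the class of a real-valued harmonic
function `f` on `ℤ²` to the sequence of restrictions to `Γₙ` of its pointwise
reduction mod `ℤ` — is a group isomorphism.  Elementwise: the map is well defined,
surjective onto the inverse limit, and two real harmonic functions have the same
image iff they differ by an integer-valued harmonic function. -/
theorem real_harmonic_quotient_iso_limit_extended_sandpile
    (Γ : ℕ → Set (ℤ × ℤ)) (hmono : ∀ n, Γ n ⊆ Γ (n + 1))
    (hfin : ∀ n, (Γ n).Finite) (hconv : ∀ n, LatticeConvex (Γ n))
    (hU : ⋃ n, Γ n = Set.univ) :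
    -- well defined: the reduction of a real harmonic function restricts to a
    -- circle-valued harmonic function on each `Γ n`, compatibly with restriction
    (∀ f : ℤ × ℤ → ℝ, IsHarmonicAll f →
      ∀ n, IsHarmonicOn (Γ n)
        (fun v : ↥(Γ n) => (f v.1 : AddCircle (1 : ℝ)))) ∧
    -- surjective onto the inverse limit
    (∀ s : ∀ n, ↥(Γ n) → AddCircle (1 : ℝ),
      (∀ n, IsHarmonicOn (Γ n) (s n)) →
      (∀ n (v : ↥(Γ n)), s (n + 1) ⟨v.1, hmono n v.2⟩ = s n v) →
      ∃ f : ℤ × ℤ → ℝ, IsHarmonicAll f ∧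
        ∀ n (v : ↥(Γ n)), (f v.1 : AddCircle (1 : ℝ)) = s n v) ∧
    -- kernel: two real harmonic functions have the same image iff they differ
    -- by an integer-valued harmonic function
    (∀ f g : ℤ × ℤ → ℝ, IsHarmonicAll f → IsHarmonicAll g →
      ((∀ n (v : ↥(Γ n)),
          (f v.1 : AddCircle (1 : ℝ)) = (g v.1 : AddCircle (1 : ℝ))) ↔
        ∃ h : ℤ × ℤ → ℤ, IsHarmonicAll h ∧ ∀ v, f v = g v + (h v : ℝ))) := by
  have hmem : ∀ v : ℤ × ℤ, ∃ n, v ∈ Γ n := by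
    intro v
    have : v ∈ ⋃ n, Γ n := by rw [hU]; trivial
    exact Set.mem_iUnion.mp this
  have hsub : ∀ n m, n ≤ m → ∀ v, v ∈ Γ n → v ∈ Γ m := by
    intro n m hnm
    induction m, hnm using Nat.le_induction with
    | base => exact fun v hv => hv
    | succ m hnm ih => exact fun v hv => hmono m (ih v hv)
  refine ⟨?_, ?_, ?_⟩
  · -- well defined
    intro f hf n v hv
    have hc := congrArg sandPhi (hf v)
    rw [map_zsmul, map_add, map_add, map_add] at hc
    exact hc
  · -- surjectivity
    intro s hs hcompat
    have hcomp2 : ∀ n m, n ≤ m → ∀ v (hv : v ∈ Γ n) (hv' : v ∈ Γ m),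
        s m ⟨v, hv'⟩ = s n ⟨v, hv⟩ := by
      intro n m hnm
      induction m, hnm using Nat.le_induction with
      | base => intro v hv hv'; rfl
      | succ m hnm ih =>
        intro v hv hv'
        have hm : v ∈ Γ m := hsub n m hnm v hv
        have h1 : s (m+1) ⟨v, hv'⟩ = s m ⟨v, hm⟩ := hcompat m ⟨v, hm⟩
        rw [h1]; exact ih v hv hm
    set ψ : ℤ × ℤ → AddCircle (1:ℝ) :=
      fun v => s (hmem v).choose ⟨v, (hmem v).choose_spec⟩ with hψdef
    have keyψ : ∀ n v (hv : v ∈ Γ n), ψ v = s n ⟨v, hv⟩ := by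
      intro n v hv
      set m := (hmem v).choose with hm
      have cs : v ∈ Γ m := (hmem v).choose_spec
      have hvN : v ∈ Γ (max m n) := hsub m (max m n) (le_max_left m n) v cs
      have h1 := hcomp2 m (max m n) (le_max_left m n) v cs hvN
      have h2 := hcomp2 n (max m n) (le_max_right m n) v hv hvN
      calc ψ v = s m ⟨v, cs⟩ := rfl
        _ = s (max m n) ⟨v, hvN⟩ := h1.symm
        _ = s n ⟨v, hv⟩ := h2
    have hψh : IsHarmonicAll ψ := by
      intro v
      obtain ⟨n0, h0⟩ := hmem v
      obtain ⟨n1, h1⟩ := hmem (v.1+1, v.2)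
      obtain ⟨n2, h2⟩ := hmem (v.1-1, v.2)
      obtain ⟨n3, h3⟩ := hmem (v.1, v.2+1)
      obtain ⟨n4, h4⟩ := hmem (v.1, v.2-1)
      set N := n0+n1+n2+n3+n4 with hN
      have hv0 : v ∈ Γ N := hsub n0 N (by omega) v h0
      have hv1 : (v.1+1, v.2) ∈ Γ N := hsub n1 N (by omega) _ h1
      have hv2 : (v.1-1, v.2) ∈ Γ N := hsub n2 N (by omega) _ h2
      have hv3 : (v.1, v.2+1) ∈ Γ N := hsub n3 N (by omega) _ h3
      have hv4 : (v.1, v.2-1) ∈ Γ N := hsub n4 N (by omega) _ h4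
      have hint : v ∈ latInterior (Γ N) := ⟨hv0, hv1, hv2, hv3, hv4⟩
      have hh := hs N v hint
      rw [keyψ N v hv0, keyψ N _ hv1, keyψ N _ hv2, keyψ N _ hv3, keyψ N _ hv4]
      exact hh
    obtain ⟨f, hf1, hf2⟩ := sand_lift_exists ψ hψh
    refine ⟨f, hf1, ?_⟩
    intro n v
    rw [hf2 v.1, keyψ n v.1 v.2]
  · -- kernel
    intro f g hf hg
    constructor
    · intro heq
      have hall : ∀ v : ℤ × ℤ, ∃ k : ℤ, f v = g v + k := by
        intro v
        obtain ⟨n, hn⟩ := hmem v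
        exact (sand_coe_eq_iff _ _).mp (heq n ⟨v, hn⟩)
      choose h hk using hall
      refine ⟨h, ?_, hk⟩
      intro v
      have h1 := hf v
      have h2 := hg v
      have key : (((4:ℤ) * h v : ℤ) : ℝ) =
          ((h (v.1+1,v.2) + h (v.1-1,v.2) + h (v.1,v.2+1) + h (v.1,v.2-1) : ℤ) : ℝ) := by
        rw [zsmul_eq_mul] at h1 h2
        push_cast at h1 h2 ⊢
        rw [hk v, hk (v.1+1,v.2), hk (v.1-1,v.2), hk (v.1,v.2+1), hk (v.1,v.2-1)] at h1
        linarith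
      rw [smul_eq_mul]
      exact_mod_cast key
    · rintro ⟨h, hh, hfg⟩ n v
      rw [sandPhi_eq, sandPhi_eq, hfg v.1, map_add]
      have hz : sandPhi ((h v.1 : ℤ) : ℝ) = 0 := by
        rw [← sandPhi_eq, AddCircle.coe_eq_zero_iff]
        exact ⟨h v.1, by simp⟩
      rw [hz, add_zero]
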